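/- Strong non-nullness of the specification of the binned measure. There exists a constant c > 0 such that for all m, n ≥ 1, all a ∈ A and all ω ∈ Ω, P⁽ᵇ⁾(X₀ = a | X₋ₘ = ω(−m),…,X₋₁ = ω(−1), X₁ = ω(1),…,Xₙ = ω(n)) ≥ c, where the conditional probability is the ratio of the corresponding cylinder probabilities under P⁽ᵇ⁾. -/

import Mathlib

open MeasureTheory Filter

/-- Alphabet of spike patterns of `N` neurons. -/
abbrev Pat (N : ℕ) : Type := Fin N → Bool

/-- Space of spike trains (configurations). -/
abbrev Conf (N : ℕ) : Type := ℤ → Pat N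

/-- Conditional probability of cylinder sets, defined as the ratio of the
corresponding (cylinder) probabilities. -/
noncomputable def condProb {N : ℕ} (P : Measure (Conf N)) (E C : Set (Conf N)) : ℝ :=
  (P (E ∩ C)).toReal / (P C).toReal

/-- Cylinder set prescribing the configuration on the finite set `s`. -/
def cyl {N : ℕ} (s : Finset ℤ) (v : ℤ → Pat N) : Set (Conf N) :=
  {ω | ∀ n ∈ s, ω n = v n}

/-- The left shift. -/
def shiftMap {N : ℕ} : Conf N → Conf N := fun ω n => ω (n + 1)

/-- The binning map with window size `τ`: `(binMap τ ω) m k = true` iff neuron `k`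
spikes at least once in the window `{mτ, …, (m+1)τ - 1}`. -/
def binMap {N : ℕ} (τ : ℕ) (ω : Conf N) : Conf N :=
  fun m k => (List.range τ).any fun i => ω (m * (τ : ℤ) + (i : ℤ)) k

/-- The all-false pattern (no neuron spikes). -/
def zPat (N : ℕ) : Pat N := fun _ => false

/-- `P` is (stationary) Markov of order `D`: conditioning the present on any finite
past of length `m ≥ D` equals conditioning on the last `D` coordinates. -/
def MarkovOrder {N : ℕ} (P : Measure (Conf N)) (D : ℕ) : Prop :=
  ∀ (a : Pat N) (m : ℕ), D ≤ m → ∀ w : ℤ → Pat N,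
    condProb P {ω | ω 0 = a} (cyl (Finset.Icc (-(m : ℤ)) (-1)) w)
      = condProb P {ω | ω 0 = a} (cyl (Finset.Icc (-(D : ℤ)) (-1)) w)

/-- Every finite cylinder has strictly positive probability. -/
def PosCyl {N : ℕ} (P : Measure (Conf N)) : Prop :=
  ∀ (s : Finset ℤ) (v : ℤ → Pat N), 0 < P (cyl s v)

open Finset

/-!
The binned conditioning event only constrains the unbinned configuration on the windows of the
conditioning bins, which leaves the window `[0, τ)` of bin `0` free. By shift invariance a cylinder
probability factors into one-step conditional probabilities, and by positivity and the Markov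
property each factor is at least some `δ > 0`, a minimum over finitely many pasts. Overwriting the
window `[0, τ)` with the sparse block `spread τ (fun _ => a)`, which bins to `a`, changes only the
factors at the `τ` overwritten times and at the `D` times after them, so it costs at most a factor
`δ ^ (τ + D)`. Summing over the `|A| ^ τ` blocks the window can carry gives the bound
`δ ^ (τ + D) / |A| ^ τ` for the binned conditional probability.
-/

variable {N : ℕ}

lemma cyl_congr {s : Finset ℤ} {v v' : ℤ → Pat N} (h : ∀ n ∈ s, v n = v' n) :
    cyl s v = cyl s v' := by
  ext ω
  exact forall₂_congr fun n hn => by rw [h n hn]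

lemma cyl_subset_cyl {s t : Finset ℤ} (hst : s ⊆ t) (v : ℤ → Pat N) : cyl t v ⊆ cyl s v :=
  fun _ hω n hn => hω n (hst hn)

lemma cyl_insert (n : ℤ) (s : Finset ℤ) (v : ℤ → Pat N) :
    cyl (insert n s) v = {ω | ω n = v n} ∩ cyl s v := by
  ext ω
  simp [cyl]

lemma cyl_inter_cyl {s t : Finset ℤ} (hst : Disjoint s t) (v u : ℤ → Pat N) :
    cyl s v ∩ cyl t u = cyl (s ∪ t) (t.piecewise u v) := by
  ext ω
  simp only [cyl, Set.mem_inter_iff, Set.mem_ofPred_eq, mem_union]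
  constructor
  · rintro ⟨hs, ht⟩ n (hn | hn)
    · rw [piecewise_eq_of_notMem _ _ _ (disjoint_left.1 hst hn), hs n hn]
    · rw [piecewise_eq_of_mem _ _ _ hn, ht n hn]
  · intro h
    refine ⟨fun n hn => ?_, fun n hn => ?_⟩
    · rw [h n (.inl hn), piecewise_eq_of_notMem _ _ _ (disjoint_left.1 hst hn)]
    · rw [h n (.inr hn), piecewise_eq_of_mem _ _ _ hn]

lemma cyl_subset_of_dependsOn {s : Finset ℤ} {G : Set (Conf N)}
    (hG : DependsOn (· ∈ G) (s : Set ℤ)) {x : Conf N} (hx : x ∈ G) : cyl s x ⊆ G :=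
  fun _ hω => Eq.mp (hG fun n hn => (hω n hn).symm) hx

lemma measurable_of_dependsOn {β : Type*} [MeasurableSpace β] {f : Conf N → β} {s : Finset ℤ}
    (hf : DependsOn f (s : Set ℤ)) : Measurable f := by
  have : Nonempty β := ⟨f fun _ => zPat N⟩
  obtain ⟨g, rfl⟩ := dependsOn_iff_exists_comp.1 hf
  exact measurable_of_countable g |>.comp (Set.measurable_restrict _)

lemma measurableSet_cyl (s : Finset ℤ) (v : ℤ → Pat N) : MeasurableSet (cyl s v) :=
  measurableSet_setOfPred.2 <| measurable_of_dependsOn (s := s) fun x y h =>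
    propext <| forall₂_congr fun n hn => by rw [h n hn]

def extendBlock (s : Finset ℤ) (b : s → Pat N) : ℤ → Pat N :=
  fun n => if h : n ∈ s then b ⟨n, h⟩ else zPat N

lemma extendBlock_restrict {s : Finset ℤ} {w : ℤ → Pat N} {n : ℤ} (hn : n ∈ s) :
    extendBlock s (s.restrict w) n = w n := by
  simp [extendBlock, hn]

lemma restrict_preimage_singleton (s : Finset ℤ) (b : s → Pat N) :
    (s.restrict : Conf N → s → Pat N) ⁻¹' {b} = cyl s (extendBlock s b) := by
  ext ω
  simp only [Set.mem_preimage, Set.mem_singleton_iff, funext_iff, Subtype.forall,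
    Finset.restrict, cyl, Set.mem_ofPred_eq, extendBlock]
  exact forall₂_congr fun n hn => by rw [dif_pos hn]

section Partition

variable (P : Measure (Conf N)) [IsFiniteMeasure P]

lemma measureReal_eq_sum_inter_cyl (E : Set (Conf N)) (s : Finset ℤ) :
    P.real E = ∑ b : s → Pat N, P.real (E ∩ cyl s (extendBlock s b)) := by
  rw [← measureReal_restrict_apply_univ, ← Set.preimage_univ (f := s.restrict), ← coe_univ,
    ← sum_measureReal_preimage_singleton _ fun b _ => Finset.measurable_restrict s
      (measurableSet_singleton b)]
  refine sum_congr rfl fun b _ => ?_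
  rw [measureReal_restrict_apply (Finset.measurable_restrict s (measurableSet_singleton b)),
    restrict_preimage_singleton, Set.inter_comm]

lemma mul_measureReal_le_measureReal_inter {s : Finset ℤ} {G F : Set (Conf N)}
    (hGs : DependsOn (· ∈ G) (s : Set ℤ)) {C : ℝ}
    (h : ∀ v ∈ G, C * P.real (cyl s v) ≤ P.real (cyl s v ∩ F)) :
    C * P.real G ≤ P.real (G ∩ F) := by
  rw [measureReal_eq_sum_inter_cyl P G s, measureReal_eq_sum_inter_cyl P (G ∩ F) s,
    mul_sum]
  refine sum_le_sum fun b _ => ?_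
  by_cases hb : extendBlock s b ∈ G
  · have hsub := cyl_subset_of_dependsOn hGs hb
    rw [Set.inter_eq_right.2 hsub, Set.inter_right_comm, Set.inter_eq_right.2 hsub]
    exact h _ hb
  · have : G ∩ cyl s (extendBlock s b) = ∅ :=
      Set.eq_empty_of_forall_notMem fun ω ⟨hωG, hω⟩ =>
        hb (Eq.mp (hGs fun n hn => hω n hn) hωG)
    rw [this, measureReal_empty, mul_zero]
    exact measureReal_nonneg

end Partition

lemma binMap_congr {τ : ℕ} {x y : Conf N} {j : ℤ}
    (h : ∀ i < τ, x (j * τ + i) = y (j * τ + i)) : binMap τ x j = binMap τ y j := by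
  funext k
  simp only [binMap]
  rw [Bool.eq_iff_iff, List.any_eq_true, List.any_eq_true]
  exact exists_congr fun i => and_congr_right fun hi => by rw [h i (List.mem_range.1 hi)]

lemma measurable_binMap (τ : ℕ) : Measurable (binMap (N := N) τ) :=
  measurable_pi_lambda _ fun j => measurable_of_dependsOn (s := Ico (j * τ) (j * τ + τ))
    fun _ _ h => binMap_congr fun i hi => h _ <| mem_Ico.2
      ⟨le_add_of_nonneg_right i.cast_nonneg, by simpa using hi⟩

lemma dependsOn_mem_preimage_binMap_cyl {τ : ℕ} {S W : Finset ℤ} (ω : Conf N)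
    (hW : ∀ j ∈ S, ∀ i < τ, j * τ + i ∈ W) :
    DependsOn (· ∈ binMap τ ⁻¹' cyl S ω) (W : Set ℤ) := fun _ _ h =>
  propext <| forall₂_congr fun j hj => by rw [binMap_congr fun i hi => h _ (hW j hj i hi)]

def spread (τ : ℕ) (ω : Conf N) : Conf N :=
  fun z => if (τ : ℤ) ∣ z then ω (z / τ) else zPat N

lemma spread_mul_add {τ i : ℕ} (hi : i < τ) (ω : Conf N) (j : ℤ) :
    spread τ ω (j * τ + i) = if i = 0 then ω j else zPat N := by
  have hτ : (τ : ℤ) ≠ 0 := by omega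
  rcases eq_or_ne i 0 with rfl | hi0
  · simp [spread, Int.mul_ediv_cancel _ hτ]
  · have : ¬ (τ : ℤ) ∣ j * τ + i := by
      rw [Int.dvd_add_right (dvd_mul_left _ _), Int.natCast_dvd_natCast]
      exact Nat.not_dvd_of_pos_of_lt (Nat.pos_of_ne_zero hi0) hi
    simp [spread, this, hi0]

lemma binMap_spread {τ : ℕ} (hτ : 0 < τ) (ω : Conf N) : binMap τ (spread τ ω) = ω := by
  funext j k
  rw [binMap, Bool.eq_iff_iff, List.any_eq_true]
  constructor
  · rintro ⟨i, hi, h⟩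
    rw [spread_mul_add (List.mem_range.1 hi)] at h
    split_ifs at h
    · exact h
    · simp [zPat] at h
  · intro h
    exact ⟨0, List.mem_range.2 hτ, by rw [spread_mul_add hτ, if_pos rfl]; exact h⟩

lemma dependsOn_mem_preimage_binMap_cyl_Icc_union_Icc {τ : ℕ} (m n : ℕ) (ω : Conf N) :
    DependsOn (· ∈ binMap τ ⁻¹' cyl (Icc (-(m : ℤ)) (-1) ∪ Icc 1 (n : ℤ)) ω)
      ((Icc (-(m * τ : ℤ)) (-1) ∪ Icc (τ : ℤ) ((n + 1) * τ - 1) : Finset ℤ) : Set ℤ) :=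
  dependsOn_mem_preimage_binMap_cyl ω fun j hj i hi => by
    have hi' : (i : ℤ) < τ := by exact_mod_cast hi
    simp only [mem_union, mem_Icc] at hj ⊢
    rcases hj with hj | hj
    · exact .inl ⟨by nlinarith, by nlinarith⟩
    · exact .inr ⟨by nlinarith, by nlinarith⟩

lemma cyl_spread_subset_preimage_binMap {τ : ℕ} (hτ : 0 < τ) (a : Pat N) :
    cyl (Icc 0 (τ - 1)) (spread τ fun _ => a) ⊆ binMap τ ⁻¹' {x | x 0 = a} := fun x hx => by
  show binMap τ x 0 = a
  rw [binMap_congr fun i hi => hx _ (by simp only [mem_Icc]; omega), binMap_spread hτ]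

section Shift

variable {P : Measure (Conf N)}

lemma measurable_shiftMap : Measurable (shiftMap (N := N)) :=
  measurable_pi_lambda _ fun _ => measurable_pi_apply _

lemma measure_cyl_Icc_add_one (hshift : Measure.map shiftMap P = P) (a b : ℤ)
    (v : ℤ → Pat N) :
    P (cyl (Icc (a + 1) (b + 1)) v) = P (cyl (Icc a b) fun n => v (n + 1)) := by
  have : shiftMap ⁻¹' cyl (Icc a b) (fun n => v (n + 1)) = cyl (Icc (a + 1) (b + 1)) v := by
    ext ω
    simp only [cyl, shiftMap, Set.mem_preimage, Set.mem_ofPred_eq, mem_Icc]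
    exact ⟨fun h n hn => by simpa using h (n - 1) (by omega),
      fun h n hn => h (n + 1) (by omega)⟩
  rw [← this, ← Measure.map_apply measurable_shiftMap (measurableSet_cyl _ _), hshift]

lemma measure_cyl_Icc_add (hshift : Measure.map shiftMap P = P) (k : ℤ) :
    ∀ (a b : ℤ) (v : ℤ → Pat N),
      P (cyl (Icc (a + k) (b + k)) v) = P (cyl (Icc a b) fun n => v (n + k)) := by
  induction k with
  | zero => simp
  | succ k ih =>
    intro a b v
    rw [← add_assoc, ← add_assoc, measure_cyl_Icc_add_one hshift, ih]
    simp only [add_assoc]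
  | pred k ih =>
    intro a b v
    have := measure_cyl_Icc_add_one hshift (a + (-k - 1)) (b + (-k - 1)) fun n => v (n - 1)
    simp only [add_sub_cancel_right] at this
    rw [← this, show a + (-k - 1) + 1 = a + -k by ring, show b + (-k - 1) + 1 = b + -k by ring,
      ih]
    simp only [add_sub_assoc]

lemma measureReal_cyl_Icc_sub (hshift : Measure.map shiftMap P = P) (k a b : ℤ)
    (v : ℤ → Pat N) :
    P.real (cyl (Icc (a - k) (b - k)) fun n => v (n + k)) = P.real (cyl (Icc a b) v) := by
  have := measure_cyl_Icc_add hshift k (a - k) (b - k) v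
  simp only [sub_add_cancel] at this
  rw [measureReal_def, measureReal_def, this]

end Shift

section PastConditioning

variable {P : Measure (Conf N)}

lemma condProb_def (E C : Set (Conf N)) :
    condProb P E C = P.real (E ∩ C) / P.real C := rfl

lemma condProb_le_one [IsFiniteMeasure P] (E C : Set (Conf N)) : condProb P E C ≤ 1 :=
  div_le_one_of_le₀ (measureReal_mono Set.inter_subset_right) measureReal_nonneg

lemma PosCyl.measureReal_pos [IsFiniteMeasure P] (hpos : PosCyl P) (s : Finset ℤ)
    (v : ℤ → Pat N) : 0 < P.real (cyl s v) :=
  ENNReal.toReal_pos (hpos s v).ne' (measure_ne_top P _)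

lemma PosCyl.measureReal_pos_of_dependsOn [IsFiniteMeasure P] (hpos : PosCyl P) {s : Finset ℤ}
    {G : Set (Conf N)} (hG : DependsOn (· ∈ G) (s : Set ℤ)) {x : Conf N} (hx : x ∈ G) :
    0 < P.real G :=
  (hpos.measureReal_pos s x).trans_le (measureReal_mono (cyl_subset_of_dependsOn hG hx))

noncomputable def condPast (P : Measure (Conf N)) (ℓ : ℕ) (a : Pat N) (w : ℤ → Pat N) :
    ℝ :=
  condProb P {ω | ω 0 = a} (cyl (Icc (-(ℓ : ℤ)) (-1)) w)

lemma condPast_congr {ℓ : ℕ} {a : Pat N} {w w' : ℤ → Pat N}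
    (h : ∀ n ∈ Icc (-(ℓ : ℤ)) (-1), w n = w' n) :
    condPast P ℓ a w = condPast P ℓ a w' := by
  rw [condPast, condPast, cyl_congr h]

lemma condPast_pos [IsFiniteMeasure P] (hpos : PosCyl P) (ℓ : ℕ) (a : Pat N)
    (w : ℤ → Pat N) : 0 < condPast P ℓ a w := by
  have hnum : {ω : Conf N | ω 0 = a} ∩ cyl (Icc (-(ℓ : ℤ)) (-1)) w
      = cyl (insert 0 (Icc (-(ℓ : ℤ)) (-1))) (Function.update w 0 a) := by
    rw [cyl_insert, Function.update_self]
    congr 1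
    refine cyl_congr fun n hn => (Function.update_of_ne ?_ _ _).symm
    simp only [mem_Icc] at hn
    omega
  rw [condPast, condProb_def, hnum]
  exact div_pos (hpos.measureReal_pos _ _) (hpos.measureReal_pos _ _)

lemma MarkovOrder.condPast_eq {D ℓ : ℕ} (hMarkov : MarkovOrder P D) (h : D ≤ ℓ) (a : Pat N)
    (w : ℤ → Pat N) : condPast P ℓ a w = condPast P D a w :=
  hMarkov a ℓ h w

/-- Under the Markov property the pasts of length at most `D`, read off the window `[-D, -1]`,
already produce every value of `condPast P ℓ a w`. -/
noncomputable def minCondPast (P : Measure (Conf N)) (D : ℕ) : ℝ :=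
  (univ : Finset (Fin (D + 1) × Pat N × (Icc (-(D : ℤ)) (-1) → Pat N))).inf' univ_nonempty
    fun p => condPast P p.1 p.2.1 (extendBlock _ p.2.2)

lemma minCondPast_pos [IsFiniteMeasure P] (hpos : PosCyl P) (D : ℕ) : 0 < minCondPast P D :=
  (lt_inf'_iff _).2 fun _ _ => condPast_pos hpos _ _ _

lemma minCondPast_le_condPast {D : ℕ} (hMarkov : MarkovOrder P D) (ℓ : ℕ) (a : Pat N)
    (w : ℤ → Pat N) : minCondPast P D ≤ condPast P ℓ a w := by
  obtain ⟨ℓ', hℓ', hq⟩ : ∃ ℓ' ≤ D, condPast P ℓ a w = condPast P ℓ' a w := by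
    rcases le_total ℓ D with h | h
    · exact ⟨ℓ, h, rfl⟩
    · exact ⟨D, le_rfl, hMarkov.condPast_eq h a w⟩
  have hw : condPast P ℓ' a w
      = condPast P ℓ' a (extendBlock _ ((Icc (-(D : ℤ)) (-1)).restrict w)) :=
    condPast_congr fun n hn =>
      (extendBlock_restrict (by simp only [mem_Icc] at hn ⊢; omega)).symm
  rw [hq, hw]
  exact inf'_le _ (mem_univ ((⟨ℓ', by omega⟩ : Fin (D + 1)), a, _))

lemma minCondPast_le_one [IsFiniteMeasure P] {D : ℕ} (hMarkov : MarkovOrder P D) :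
    minCondPast P D ≤ 1 :=
  (minCondPast_le_condPast hMarkov 0 (zPat N) fun _ => zPat N).trans (condProb_le_one _ _)

end PastConditioning

section Comparison

variable {P : Measure (Conf N)} [IsFiniteMeasure P] {D : ℕ}

lemma measureReal_cyl_Icc_eq_condPast_mul (hshift : Measure.map shiftMap P = P)
    (hpos : PosCyl P) {L t : ℤ} (hLt : L ≤ t) (w : ℤ → Pat N) :
    P.real (cyl (Icc L t) w)
      = condPast P (t - L).toNat (w t) (fun n => w (n + t)) * P.real (cyl (Icc L (t - 1)) w) := by
  have hnum := measureReal_cyl_Icc_sub hshift t L t w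
  have hden := measureReal_cyl_Icc_sub hshift t L (t - 1) w
  have hIcc : Icc (L - t) 0 = insert 0 (Icc (L - t) (-1)) := by
    ext n
    simp only [mem_Icc, mem_insert]
    omega
  rw [sub_self, hIcc, cyl_insert, zero_add] at hnum
  rw [sub_sub_cancel_left] at hden
  rw [condPast, condProb_def, Int.toNat_of_nonneg (by omega), neg_sub, hnum, hden,
    div_mul_cancel₀ _ (hpos.measureReal_pos _ _).ne']

lemma pow_mul_measureReal_cyl_Icc_le (hshift : Measure.map shiftMap P = P) (hpos : PosCyl P)
    (hMarkov : MarkovOrder P D) {L t : ℤ} (hLt : L ≤ t + 1) (w : ℤ → Pat N) (k : ℕ) :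
    minCondPast P D ^ k * P.real (cyl (Icc L t) w) ≤ P.real (cyl (Icc L (t + k)) w) := by
  induction k with
  | zero => simp
  | succ k ih =>
    rw [Nat.cast_succ, ← add_assoc,
      measureReal_cyl_Icc_eq_condPast_mul hshift hpos (t := t + k + 1) (by omega),
      add_sub_cancel_right, pow_succ', mul_assoc]
    exact mul_le_mul (minCondPast_le_condPast hMarkov _ _ _) ih
      (mul_nonneg (pow_nonneg (minCondPast_pos hpos D).le _) measureReal_nonneg)
      (condPast_pos hpos _ _ _).le

lemma pow_mul_measureReal_cyl_Icc_le_of_eqOn_of_lt (hshift : Measure.map shiftMap P = P)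
    (hpos : PosCyl P) (hMarkov : MarkovOrder P D) {τ : ℕ} {L R : ℤ} (hL : L ≤ 0)
    (hR : -1 ≤ R) (hRτ : R < τ + D) {w w' : ℤ → Pat N}
    (hw : ∀ n : ℤ, n < 0 → w' n = w n) :
    minCondPast P D ^ (τ + D) * P.real (cyl (Icc L R) w') ≤ P.real (cyl (Icc L R) w) := by
  have hδ0 := (minCondPast_pos hpos D).le
  calc minCondPast P D ^ (τ + D) * P.real (cyl (Icc L R) w')
      ≤ minCondPast P D ^ (τ + D) * P.real (cyl (Icc L (-1)) w') :=
        mul_le_mul_of_nonneg_left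
          (measureReal_mono (cyl_subset_cyl (Icc_subset_Icc_right hR) w')) (pow_nonneg hδ0 _)
    _ = minCondPast P D ^ (τ + D) * P.real (cyl (Icc L (-1)) w) := by
        rw [cyl_congr fun n hn => hw n (by simp only [mem_Icc] at hn; omega)]
    _ ≤ minCondPast P D ^ (R + 1).toNat * P.real (cyl (Icc L (-1)) w) := by
        refine mul_le_mul_of_nonneg_right ?_ measureReal_nonneg
        refine pow_le_pow_of_le_one hδ0 (minCondPast_le_one hMarkov) ?_
        omega
    _ ≤ P.real (cyl (Icc L R) w) := by
        convert pow_mul_measureReal_cyl_Icc_le hshift hpos hMarkov (L := L) (t := -1) (by omega)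
          w (R + 1).toNat
        omega

/-- The factors of the window `[0, τ)` and of the `D` times after it are paid for by the uniform
bound `minCondPast`; beyond them the Markov factors of `w` and `w'` coincide. -/
lemma pow_mul_measureReal_cyl_Icc_le_of_eqOn (hshift : Measure.map shiftMap P = P)
    (hpos : PosCyl P) (hMarkov : MarkovOrder P D) {τ : ℕ} {L : ℤ} (hL : L ≤ 0)
    {w w' : ℤ → Pat N} (hw : ∀ n : ℤ, n < 0 ∨ τ ≤ n → w' n = w n) {R : ℤ}
    (hR : -1 ≤ R) :
    minCondPast P D ^ (τ + D) * P.real (cyl (Icc L R) w') ≤ P.real (cyl (Icc L R) w) := by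
  induction R, hR using Int.leInduction with
  | base =>
    exact pow_mul_measureReal_cyl_Icc_le_of_eqOn_of_lt hshift hpos hMarkov hL le_rfl
      (by omega) fun n hn => hw n (.inl hn)
  | succ R hR ih =>
    rcases lt_or_ge (R + 1) (τ + D) with hRτ | hRτ
    · exact pow_mul_measureReal_cyl_Icc_le_of_eqOn_of_lt hshift hpos hMarkov hL (by omega) hRτ
        fun n hn => hw n (.inl hn)
    have hfactor : condPast P (R + 1 - L).toNat (w' (R + 1)) (fun n => w' (n + (R + 1)))
        = condPast P (R + 1 - L).toNat (w (R + 1)) (fun n => w (n + (R + 1))) := by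
      have hD : D ≤ (R + 1 - L).toNat := by omega
      rw [hMarkov.condPast_eq hD, hMarkov.condPast_eq hD, hw _ (.inr (by omega))]
      exact condPast_congr fun n hn => hw _ (.inr (by simp only [mem_Icc] at hn; omega))
    have hLR : L ≤ R + 1 := by omega
    rw [measureReal_cyl_Icc_eq_condPast_mul hshift hpos hLR w',
      measureReal_cyl_Icc_eq_condPast_mul hshift hpos hLR w, hfactor,
      add_sub_cancel_right, mul_left_comm]
    exact mul_le_mul_of_nonneg_left ih (condPast_pos hpos _ _ _).le

end Comparison

section Binned

variable {P : Measure (Conf N)} [IsFiniteMeasure P] {D : ℕ}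

lemma pow_div_card_mul_measureReal_cyl_le (hshift : Measure.map shiftMap P = P)
    (hpos : PosCyl P) (hMarkov : MarkovOrder P D) {τ : ℕ} {L R : ℤ} (hL : L ≤ 0)
    (hR : (τ : ℤ) - 1 ≤ R) (x v : ℤ → Pat N) :
    minCondPast P D ^ (τ + D) / Fintype.card (Icc (0 : ℤ) (τ - 1) → Pat N)
        * P.real (cyl (Icc L (-1) ∪ Icc (τ : ℤ) R) x)
      ≤ P.real (cyl (Icc L (-1) ∪ Icc (τ : ℤ) R) x ∩ cyl (Icc 0 (τ - 1)) v) := by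
  set J := Icc L (-1) ∪ Icc (τ : ℤ) R
  set I := Icc (0 : ℤ) (τ - 1)
  have hmerge : ∀ u, cyl J x ∩ cyl I u = cyl (Icc L R) (I.piecewise u x) := by
    intro u
    have hJI : J ∪ I = Icc L R := by
      ext n
      simp only [J, I, mem_union, mem_Icc]
      omega
    have hdisj : Disjoint J I := disjoint_left.2 fun n hn hn' => by
      simp only [J, I, mem_union, mem_Icc] at hn hn'
      omega
    rw [cyl_inter_cyl hdisj, hJI]
  have hcomp : ∀ u, minCondPast P D ^ (τ + D) * P.real (cyl J x ∩ cyl I u)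
      ≤ P.real (cyl J x ∩ cyl I v) := by
    intro u
    rw [hmerge, hmerge]
    refine pow_mul_measureReal_cyl_Icc_le_of_eqOn hshift hpos hMarkov hL (fun n hn => ?_)
      (by omega)
    have hnI : n ∉ I := by
      simp only [I, mem_Icc]
      omega
    rw [piecewise_eq_of_notMem _ _ _ hnI, piecewise_eq_of_notMem _ _ _ hnI]
  have hK : (0 : ℝ) < Fintype.card (I → Pat N) := by exact_mod_cast Fintype.card_pos
  rw [div_mul_eq_mul_div, div_le_iff₀ hK, measureReal_eq_sum_inter_cyl P _ I, mul_sum]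
  calc ∑ u : I → Pat N,
        minCondPast P D ^ (τ + D) * P.real (cyl J x ∩ cyl I (extendBlock I u))
      ≤ ∑ _u : I → Pat N, P.real (cyl J x ∩ cyl I v) := sum_le_sum fun u _ => hcomp _
    _ = P.real (cyl J x ∩ cyl I v) * Fintype.card (I → Pat N) := by
      rw [sum_const, card_univ, nsmul_eq_mul, mul_comm]

end Binned

theorem binned_specification_strongly_nonnull_general
    {N D τ : ℕ} (hτ : 1 ≤ τ)
    (P : Measure (Conf N)) [IsProbabilityMeasure P]
    (hshift : Measure.map shiftMap P = P)
    (hpos : PosCyl P) (hMarkov : MarkovOrder P D) :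
    ∃ c > (0 : ℝ), ∀ m n : ℕ, 1 ≤ m → 1 ≤ n →
      ∀ (a : Pat N) (ω : Conf N),
        c ≤ condProb (Measure.map (binMap τ) P) {x | x 0 = a}
          (cyl (Finset.Icc (-(m : ℤ)) (-1) ∪ Finset.Icc 1 (n : ℤ)) ω) := by
  have hK : (0 : ℝ) < Fintype.card (Icc (0 : ℤ) (τ - 1) → Pat N) := by
    exact_mod_cast Fintype.card_pos
  refine ⟨_, div_pos (pow_pos (minCondPast_pos hpos D) (τ + D)) hK, fun m n _ _ a ω => ?_⟩
  set G := binMap τ ⁻¹' cyl (Icc (-(m : ℤ)) (-1) ∪ Icc 1 (n : ℤ)) ω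
  have hGJ := dependsOn_mem_preimage_binMap_cyl_Icc_union_Icc (τ := τ) m n ω
  have hG : 0 < P.real G := hpos.measureReal_pos_of_dependsOn hGJ (x := spread τ ω) <| by
    simp only [G, Set.mem_preimage, binMap_spread hτ]
    exact fun _ _ => rfl
  have hA : MeasurableSet {x : Conf N | x 0 = a} :=
    (measurable_pi_apply 0 (measurableSet_singleton a) :
      MeasurableSet ((fun x : Conf N => x 0) ⁻¹' {a}))
  rw [condProb_def,
    map_measureReal_apply (measurable_binMap τ) (hA.inter (measurableSet_cyl _ _)),
    map_measureReal_apply (measurable_binMap τ) (measurableSet_cyl _ _), le_div_iff₀ hG]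
  calc _ ≤ P.real (G ∩ cyl (Icc 0 (τ - 1)) (spread τ fun _ => a)) :=
        mul_measureReal_le_measureReal_inter P hGJ fun v _ =>
          pow_div_card_mul_measureReal_cyl_le hshift hpos hMarkov (neg_nonpos.2 (by positivity))
            (by nlinarith) v _
    _ ≤ P.real (binMap τ ⁻¹' ({x | x 0 = a} ∩ cyl _ ω)) :=
        measureReal_mono fun x hx => ⟨cyl_spread_subset_preimage_binMap hτ a hx.2, hx.1⟩

/-- Strong non-nullness of the specification of the binned measure: there is a
constant `c > 0` such that all two-sided conditional probabilities
`P⁽ᵇ⁾(X₀ = a | X₋ₘ = ω(-m), …, X₋₁ = ω(-1), X₁ = ω(1), …, Xₙ = ω(n))`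
are bounded below by `c`. -/
theorem binned_specification_strongly_nonnull
    {N D τ : ℕ} (hN : 1 ≤ N) (hD : 1 ≤ D) (hτ : 1 ≤ τ)
    (P : Measure (Conf N)) [IsProbabilityMeasure P]
    (hshift : Measure.map shiftMap P = P)
    (hpos : PosCyl P) (hMarkov : MarkovOrder P D) :
    ∃ c > (0 : ℝ), ∀ m n : ℕ, 1 ≤ m → 1 ≤ n →
      ∀ (a : Pat N) (ω : Conf N),
        c ≤ condProb (Measure.map (binMap τ) P) {x | x 0 = a}
          (cyl (Finset.Icc (-(m : ℤ)) (-1) ∪ Finset.Icc 1 (n : ℤ)) ω) :=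
  binned_specification_strongly_nonnull_general hτ P hshift hpos hMarkov
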